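/- Let φ be a Leibniz 2-cocycle on the twisted Schrödinger-Virasoro algebra with φ(L_0, x) = φ(x, L_0) = 0 for x among all Y_n, M_n. Then φ(Y_m, M_n) = 0 and φ(M_m, Y_n) = 0 for all m, n ∈ ℤ. -/

import Mathlib

/-!
Apply the cocycle identity to `x = Y_m, y = L_k, z = M_n` (and with `x = M_n, z = Y_m`).
Since `[Y, M] = 0` and `ad L_k` rescales basis vectors, it becomes a two-term recurrence between
values of `φ`. For `k = 0` it says `(m + n) φ(Y_m, M_n) = 0`, which kills every value off the
diagonal `n = -m`. On the diagonal, choosing `k` so that one coefficient vanishes (`k = 2m` for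
`φ(Y_m, M_{-m})`, the index `n = 0` for `φ(M_n, Y_{-n})`) ties each value to one already known
to be zero.
-/

abbrev B : Type := ℤ ⊕ ℤ ⊕ ℤ
abbrev V : Type := B →₀ ℂ

noncomputable def Lg (n : ℤ) : V := Finsupp.single (Sum.inl n) 1
noncomputable def Yg (n : ℤ) : V := Finsupp.single (Sum.inr (Sum.inl n)) 1
noncomputable def Mg (n : ℤ) : V := Finsupp.single (Sum.inr (Sum.inr n)) 1

/-- Bracket on basis elements of the twisted Schrödinger–Virasoro algebra. -/
noncomputable def brB : B → B → V
  | Sum.inl n, Sum.inl m => ((m : ℂ) - n) • Lg (n + m)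
  | Sum.inl n, Sum.inr (Sum.inl m) => ((m : ℂ) - n / 2) • Yg (n + m)
  | Sum.inl n, Sum.inr (Sum.inr p) => (p : ℂ) • Mg (n + p)
  | Sum.inr (Sum.inl m), Sum.inl n => -(((m : ℂ) - n / 2) • Yg (n + m))
  | Sum.inr (Sum.inr p), Sum.inl n => -((p : ℂ) • Mg (n + p))
  | Sum.inr (Sum.inl m), Sum.inr (Sum.inl m') => ((m' : ℂ) - m) • Mg (m + m')
  | _, _ => 0

/-- The bilinear extension of the bracket to the whole space. -/
noncomputable def bk : V →ₗ[ℂ] V →ₗ[ℂ] V :=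
  Finsupp.lsum ℂ fun a => LinearMap.toSpanSingleton ℂ (V →ₗ[ℂ] V)
    (Finsupp.lsum ℂ fun b => LinearMap.toSpanSingleton ℂ V (brB a b))

/-- `φ` is a Leibniz 2-cocycle on the twisted Schrödinger–Virasoro algebra. -/
def IsLeibnizCocycle (φ : V →ₗ[ℂ] V →ₗ[ℂ] ℂ) : Prop :=
  ∀ x y z : V, φ x (bk y z) = φ (bk x y) z - φ (bk x z) y

theorem bk_single (a b : B) : bk (Finsupp.single a 1) (Finsupp.single b 1) = brB a b := by
  simp [bk, Finsupp.lsum_single, LinearMap.toSpanSingleton_apply]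

theorem bk_Lg_Yg (k m : ℤ) : bk (Lg k) (Yg m) = ((m : ℂ) - k / 2) • Yg (k + m) :=
  bk_single _ _

theorem bk_Lg_Mg (k n : ℤ) : bk (Lg k) (Mg n) = (n : ℂ) • Mg (k + n) :=
  bk_single _ _

theorem bk_Yg_Lg (m k : ℤ) : bk (Yg m) (Lg k) = -(((m : ℂ) - k / 2) • Yg (k + m)) :=
  bk_single _ _

theorem bk_Mg_Lg (n k : ℤ) : bk (Mg n) (Lg k) = -((n : ℂ) • Mg (k + n)) :=
  bk_single _ _

theorem bk_Yg_Mg (m n : ℤ) : bk (Yg m) (Mg n) = 0 :=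
  bk_single _ _

theorem bk_Mg_Yg (n m : ℤ) : bk (Mg n) (Yg m) = 0 :=
  bk_single _ _

namespace IsLeibnizCocycle

variable {φ : V →ₗ[ℂ] V →ₗ[ℂ] ℂ} (hco : IsLeibnizCocycle φ)
include hco

theorem Yg_Lg_Mg (m k n : ℤ) :
    (n : ℂ) * φ (Yg m) (Mg (k + n)) = -(((m : ℂ) - k / 2) * φ (Yg (k + m)) (Mg n)) := by
  have h := hco (Yg m) (Lg k) (Mg n)
  simp only [bk_Lg_Mg, bk_Yg_Lg, bk_Yg_Mg, map_smul, map_neg, map_zero, LinearMap.smul_apply,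
    LinearMap.neg_apply, LinearMap.zero_apply, smul_eq_mul] at h
  linear_combination h

theorem Mg_Lg_Yg (n k m : ℤ) :
    ((m : ℂ) - k / 2) * φ (Mg n) (Yg (k + m)) = -((n : ℂ) * φ (Mg (k + n)) (Yg m)) := by
  have h := hco (Mg n) (Lg k) (Yg m)
  simp only [bk_Lg_Yg, bk_Mg_Lg, bk_Mg_Yg, map_smul, map_neg, map_zero, LinearMap.smul_apply,
    LinearMap.neg_apply, LinearMap.zero_apply, smul_eq_mul] at h
  linear_combination h

theorem apply_Yg_Mg_of_add_ne_zero {m n : ℤ} (hmn : m + n ≠ 0) : φ (Yg m) (Mg n) = 0 := by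
  have h := hco.Yg_Lg_Mg m 0 n
  simp only [zero_add, Int.cast_zero, zero_div, sub_zero] at h
  have hmn' : ((m + n : ℤ) : ℂ) ≠ 0 := by exact_mod_cast hmn
  exact (mul_eq_zero.mp (by push_cast; linear_combination h)).resolve_left hmn'

theorem apply_Mg_Yg_of_add_ne_zero {n m : ℤ} (hnm : n + m ≠ 0) : φ (Mg n) (Yg m) = 0 := by
  have h := hco.Mg_Lg_Yg n 0 m
  simp only [zero_add, Int.cast_zero, zero_div, sub_zero] at h
  have hnm' : ((n + m : ℤ) : ℂ) ≠ 0 := by exact_mod_cast hnm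
  exact (mul_eq_zero.mp (by push_cast; linear_combination h)).resolve_left hnm'

theorem apply_Yg_Mg_neg (m : ℤ) : φ (Yg m) (Mg (-m)) = 0 := by
  have of_ne_zero : ∀ m : ℤ, m ≠ 0 → φ (Yg m) (Mg (-m)) = 0 := by
    intro m hm
    have h := hco.Yg_Lg_Mg m (2 * m) (-3 * m)
    rw [show 2 * m + -3 * m = -m by ring] at h
    push_cast at h
    have h' : (-3 * m : ℂ) * φ (Yg m) (Mg (-m)) = 0 := by linear_combination h
    simpa [hm] using h'
  obtain rfl | hm := eq_or_ne m 0
  · have h := hco.Yg_Lg_Mg 0 1 (-1)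
    norm_num [of_ne_zero 1 one_ne_zero] at h
    simpa using h
  · exact of_ne_zero m hm

theorem apply_Mg_Yg_neg (n : ℤ) : φ (Mg n) (Yg (-n)) = 0 := by
  have at_zero : φ (Mg 0) (Yg 0) = 0 := by
    have h := hco.Mg_Lg_Yg 0 1 (-1)
    norm_num at h
    exact h
  obtain rfl | hn := eq_or_ne n 0
  · simpa using at_zero
  · have h := hco.Mg_Lg_Yg n (-n) 0
    rw [neg_add_cancel, add_zero, at_zero] at h
    push_cast at h
    have h' : (n : ℂ) * φ (Mg n) (Yg (-n)) = 0 := by linear_combination 2 * h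
    simpa [hn] using h'

theorem apply_Yg_Mg (m n : ℤ) : φ (Yg m) (Mg n) = 0 := by
  obtain rfl | hmn := eq_or_ne n (-m)
  · exact hco.apply_Yg_Mg_neg m
  · exact hco.apply_Yg_Mg_of_add_ne_zero (by omega)

theorem apply_Mg_Yg (n m : ℤ) : φ (Mg n) (Yg m) = 0 := by
  obtain rfl | hnm := eq_or_ne m (-n)
  · exact hco.apply_Mg_Yg_neg n
  · exact hco.apply_Mg_Yg_of_add_ne_zero (by omega)

end IsLeibnizCocycle

theorem stmt9_general (φ : V →ₗ[ℂ] V →ₗ[ℂ] ℂ) (hco : IsLeibnizCocycle φ) :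
    ∀ m n : ℤ, φ (Yg m) (Mg n) = 0 ∧ φ (Mg m) (Yg n) = 0 :=
  fun m n => ⟨hco.apply_Yg_Mg m n, hco.apply_Mg_Yg m n⟩

theorem stmt9 (φ : V →ₗ[ℂ] V →ₗ[ℂ] ℂ) (hco : IsLeibnizCocycle φ)
    (hY1 : ∀ n : ℤ, φ (Lg 0) (Yg n) = 0) (hY2 : ∀ n : ℤ, φ (Yg n) (Lg 0) = 0)
    (hM1 : ∀ n : ℤ, φ (Lg 0) (Mg n) = 0) (hM2 : ∀ n : ℤ, φ (Mg n) (Lg 0) = 0) :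
    ∀ m n : ℤ, φ (Yg m) (Mg n) = 0 ∧ φ (Mg m) (Yg n) = 0 :=
  stmt9_general φ hco
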